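/- Let N ≥ 3 be an integer. Then for every θ ∈ ℝ, Σ_{i=1}^{N} [ β̃^{[2π(i−1)/N, 2π(i+1)/N]}(θ) − β̃^{[2π(i−1)/N, 2πi/N]}(θ) ] = tan(π/N); that is, the alternating difference of the 2π-periodically extended coolness functions of the N double arcs and the N single arcs is the constant function tan(π/N). -/

import Mathlib

open Real

/-- Coolness function on the circle:
`β^{[p,q]}(θ) = 2 sin((θ-p)/2) sin((q-θ)/2) / sin((q-p)/2)` on `[p,q]`, `0` outside. -/
noncomputable def betaCirc (p q θ : ℝ) : ℝ :=
  if θ ∈ Set.Icc p q then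
    2 * Real.sin ((θ - p) / 2) * Real.sin ((q - θ) / 2) / Real.sin ((q - p) / 2)
  else 0

/-- The `2π`-periodic extension `β̃^{[p,q]}(θ) = Σ_{j∈ℤ} β^{[p,q]}(θ + 2πj)`. -/
noncomputable def betaTilde (p q θ : ℝ) : ℝ :=
  ∑' j : ℤ, betaCirc p q (θ + 2 * π * j)

lemma betaCirc_zero_right (p q θ : ℝ) (h : q ≤ θ) : betaCirc p q θ = 0 := by
  rcases h.eq_or_lt with h | h
  · unfold betaCirc
    split_ifs with hm
    · rw [← h]; simp
    · rfl
  · unfold betaCirc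
    rw [if_neg]
    intro hm
    exact absurd hm.2 (not_le.2 h)

lemma betaCirc_zero_left (p q θ : ℝ) (h : θ ≤ p) : betaCirc p q θ = 0 := by
  rcases h.eq_or_lt with h | h
  · unfold betaCirc
    split_ifs with hm
    · rw [h]; simp
    · rfl
  · unfold betaCirc
    rw [if_neg]
    intro hm
    exact absurd hm.1 (not_le.2 h)

lemma betaTilde_eq_of (p q θ : ℝ) (hq : q < p + 2*π) (j : ℤ)
    (h1 : p ≤ θ + 2*π*j) (h2 : θ + 2*π*j < p + 2*π) :
    betaTilde p q θ = betaCirc p q (θ + 2*π*j) := by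
  have hπ := Real.pi_pos
  unfold betaTilde
  apply tsum_eq_single
  intro j' hj'
  rcases lt_or_gt_of_ne hj' with h | h
  · apply betaCirc_zero_left
    have : (j':ℝ) + 1 ≤ (j:ℝ) := by exact_mod_cast h
    nlinarith
  · apply betaCirc_zero_right
    have : (j:ℝ) + 1 ≤ (j':ℝ) := by exact_mod_cast h
    nlinarith

lemma betaTilde_shift (p q θ : ℝ) (m : ℤ) :
    betaTilde p q (θ + 2*π*m) = betaTilde p q θ := by
  unfold betaTilde
  rw [← (Equiv.addLeft m).tsum_eq (f := fun j : ℤ => betaCirc p q (θ + 2*π*j))]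
  apply tsum_congr
  intro j
  simp only [Equiv.coe_addLeft]
  congr 1
  push_cast
  ring

lemma betaTilde_zero₀ (p q θ : ℝ) (hpq : p ≤ q) (hq : q < p + 2*π)
    (hθ : q ≤ θ) (h2 : θ < p + 2*π) : betaTilde p q θ = 0 := by
  rw [betaTilde_eq_of p q θ hq 0 (by push_cast; linarith) (by push_cast; linarith)]
  apply betaCirc_zero_right
  push_cast
  linarith

lemma betaTilde_zero₁ (p q θ : ℝ) (hpq : p ≤ q) (hq : q < p + 2*π)
    (hθ : q ≤ θ + 2*π) (h2 : θ < p) : betaTilde p q θ = 0 := by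
  rw [betaTilde_eq_of p q θ hq 1 (by push_cast; linarith) (by push_cast; linarith)]
  apply betaCirc_zero_right
  push_cast
  linarith

lemma betaTilde_val₀ (p q θ a b : ℝ) (hq : q < p + 2*π) (h1 : p ≤ θ) (h2 : θ ≤ q)
    (ha : (θ - p)/2 = a) (hb : (q - θ)/2 = b) :
    betaTilde p q θ = 2 * Real.sin a * Real.sin b / Real.sin (a + b) := by
  rw [betaTilde_eq_of p q θ hq 0 (by push_cast; linarith) (by push_cast; linarith)]
  unfold betaCirc
  rw [if_pos (by constructor <;> push_cast <;> linarith)]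
  push_cast
  rw [show θ + 2*π*0 = θ by ring, ha, hb, show (q - p)/2 = a + b by rw [← ha, ← hb]; ring]

lemma betaTilde_val₁ (p q θ a b : ℝ) (hq : q < p + 2*π) (h1 : p ≤ θ + 2*π) (h2 : θ + 2*π ≤ q)
    (ha : (θ + 2*π - p)/2 = a) (hb : (q - (θ + 2*π))/2 = b) :
    betaTilde p q θ = 2 * Real.sin a * Real.sin b / Real.sin (a + b) := by
  rw [betaTilde_eq_of p q θ hq 1 (by push_cast; linarith) (by push_cast; linarith)]
  unfold betaCirc
  rw [if_pos (by constructor <;> push_cast <;> linarith)]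
  push_cast
  rw [show θ + 2*π*1 = θ + 2*π by ring, ha, hb,
    show (q - p)/2 = a + b by rw [← ha, ← hb]; ring]

lemma coolness_trig (x h : ℝ) (hs : Real.sin h ≠ 0) (hc : Real.cos h ≠ 0) :
    2 * Real.sin (x+h) * Real.sin (h-x) / Real.sin (2*h)
    + 2 * Real.sin x * Real.sin (2*h-x) / Real.sin (2*h)
    - 2 * Real.sin x * Real.sin (h-x) / Real.sin h = Real.tan h := by
  rw [Real.tan_eq_sin_div_cos, Real.sin_two_mul] at *
  rw [Real.sin_sub, Real.sin_add, Real.sin_sub, Real.sin_two_mul, Real.cos_two_mul]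
  field_simp
  linear_combination (Real.sin h^2) * Real.sin_sq_add_cos_sq x - (Real.sin x^2) * Real.sin_sq_add_cos_sq h

lemma coolness_trig' (x h : ℝ) (hs : Real.sin h ≠ 0) (hc : Real.cos h ≠ 0) :
    2 * Real.sin (x+h) * Real.sin (h-x) / Real.sin ((x+h) + (h-x))
    + 2 * Real.sin x * Real.sin (2*h-x) / Real.sin (x + (2*h-x))
    - 2 * Real.sin x * Real.sin (h-x) / Real.sin (x + (h-x)) = Real.tan h := by
  rw [show (x+h) + (h-x) = 2*h by ring, show x + (2*h-x) = 2*h by ring,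
    show x + (h-x) = h by ring]
  exact coolness_trig x h hs hc


set_option maxHeartbeats 4000000 in
lemma stmt_aux (N : ℕ) (hN : 3 ≤ N) (θ : ℝ) (hθ0 : 0 ≤ θ) (hθ1 : θ < 2*π) :
    ∑ i ∈ Finset.Icc 1 N,
      (betaTilde (2 * π * ((i : ℝ) - 1) / N) (2 * π * ((i : ℝ) + 1) / N) θ
        - betaTilde (2 * π * ((i : ℝ) - 1) / N) (2 * π * (i : ℝ) / N) θ)
      = Real.tan (π / N) := by
  have hπ := Real.pi_pos
  have hN3 : (3:ℝ) ≤ (N:ℝ) := by exact_mod_cast hN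
  have hN0 : (0:ℝ) < (N:ℝ) := by linarith
  have harc : ∀ a : ℝ, 2 * π * a / N = (2*π/N) * a := fun a => by ring
  simp only [harc]
  set c : ℝ := 2*π/N with hcdef
  have hc0 : 0 < c := by positivity
  have hcN : c * (N:ℝ) = 2*π := by rw [hcdef]; field_simp
  -- locate θ
  set K : ℕ := ⌊θ * N / (2*π)⌋₊ with hKdef
  have hy0 : 0 ≤ θ * N / (2*π) := by positivity
  have hfl : (K:ℝ) ≤ θ * N / (2*π) := Nat.floor_le hy0
  have hfu : θ * N / (2*π) < (K:ℝ) + 1 := Nat.lt_floor_add_one _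
  set k : ℕ := K + 1 with hkdef
  have hk1 : 1 ≤ k := Nat.le_add_left 1 K
  have hkN : k ≤ N := by
    have hKN : K < N := by
      rw [hKdef, Nat.floor_lt hy0, div_lt_iff₀ (by positivity)]
      nlinarith
    omega
  have hkcast : (k:ℝ) = (K:ℝ) + 1 := by rw [hkdef]; push_cast; ring
  have hkl : c * ((k:ℝ) - 1) ≤ θ := by
    rw [hkcast, hcdef, show (K:ℝ) + 1 - 1 = (K:ℝ) by ring, div_mul_eq_mul_div,
      div_le_iff₀ hN0]
    rw [le_div_iff₀ (by positivity : (0:ℝ) < 2*π)] at hfl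
    nlinarith
  have hku : θ < c * (k:ℝ) := by
    rw [hkcast, hcdef, div_mul_eq_mul_div, lt_div_iff₀ hN0]
    rw [div_lt_iff₀ (by positivity : (0:ℝ) < 2*π)] at hfu
    nlinarith
  have hkNcast : (k:ℝ) ≤ (N:ℝ) := by exact_mod_cast hkN
  have hk1cast : (1:ℝ) ≤ (k:ℝ) := by exact_mod_cast hk1
  clear_value K k
  clear hfl hfu hy0 hKdef hkdef hkcast
  -- trig nonvanishing
  set h : ℝ := π / N with hhdef
  have hh0 : 0 < h := by rw [hhdef]; positivity
  have hch : c = 2 * h := by rw [hcdef, hhdef]; ring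
  have hs : Real.sin h ≠ 0 := by
    apply ne_of_gt
    apply Real.sin_pos_of_pos_of_lt_pi hh0
    rw [hhdef, div_lt_iff₀ hN0]; nlinarith
  have hcos : Real.cos h ≠ 0 := by
    apply ne_of_gt
    apply Real.cos_pos_of_mem_Ioo
    constructor
    · linarith
    · rw [hhdef, div_lt_iff₀ hN0]; nlinarith
  have hkmem : k ∈ Finset.Icc 1 N := Finset.mem_Icc.2 ⟨hk1, hkN⟩
  clear_value c h
  set x : ℝ := (θ - c * ((k:ℝ) - 1)) / 2 with hxdef
  clear_value x
  -- single arcs vanish except i = k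
  have hz1 : ∀ i ∈ Finset.Icc 1 N, i ≠ k →
      betaTilde (c * ((i:ℝ) - 1)) (c * (i:ℝ)) θ = 0 := by
    intro i hi hik
    obtain ⟨hi1, hiN⟩ := Finset.mem_Icc.1 hi
    have hiNc : (i:ℝ) ≤ (N:ℝ) := by exact_mod_cast hiN
    have hi1c : (1:ℝ) ≤ (i:ℝ) := by exact_mod_cast hi1
    rcases lt_or_gt_of_ne hik with hlt | hgt
    · have hic : (i:ℝ) + 1 ≤ (k:ℝ) := by exact_mod_cast hlt
      apply betaTilde_zero₀ <;> nlinarith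
    · have hic : (k:ℝ) + 1 ≤ (i:ℝ) := by exact_mod_cast hgt
      apply betaTilde_zero₁ <;> nlinarith
  -- value of the single arc at i = k
  have hv3 : betaTilde (c * ((k:ℝ) - 1)) (c * (k:ℝ)) θ
      = 2 * Real.sin x * Real.sin (h - x) / Real.sin (x + (h - x)) := by
    refine betaTilde_val₀ _ _ _ x (h - x) ?_ ?_ ?_ ?_ ?_
    · nlinarith
    · exact hkl
    · exact hku.le
    · rw [hxdef]
    · rw [hxdef, hch]; ring
  -- the double-arc sum
  have hB2 : ∑ i ∈ Finset.Icc 1 N, betaTilde (c * ((i:ℝ) - 1)) (c * ((i:ℝ) + 1)) θ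
      = 2 * Real.sin (x + h) * Real.sin (h - x) / Real.sin ((x + h) + (h - x))
        + 2 * Real.sin x * Real.sin (2*h - x) / Real.sin (x + (2*h - x)) := by
    by_cases hk1' : k = 1
    · -- wraparound: contributing arcs are i = 1 and i = N
      have hkc : (k:ℝ) = 1 := by rw [hk1']; norm_num
      have hθc : θ < c := by rw [hkc, mul_one] at hku; exact hku
      have hsub : ({1, N} : Finset ℕ) ⊆ Finset.Icc 1 N := by
        intro y hy
        simp only [Finset.mem_insert, Finset.mem_singleton] at hy
        rcases hy with rfl | rfl <;> rw [Finset.mem_Icc] <;> omega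
      have hz2 : ∀ i ∈ Finset.Icc 1 N, i ∉ ({1, N} : Finset ℕ) →
          betaTilde (c * ((i:ℝ) - 1)) (c * ((i:ℝ) + 1)) θ = 0 := by
        intro i hi hni
        obtain ⟨hi1, hiN⟩ := Finset.mem_Icc.1 hi
        simp only [Finset.mem_insert, Finset.mem_singleton, not_or] at hni
        have h2i : (2:ℝ) ≤ (i:ℝ) := by exact_mod_cast (show 2 ≤ i by omega)
        have hiNc : (i:ℝ) + 1 ≤ (N:ℝ) := by exact_mod_cast (show i + 1 ≤ N by omega)
        apply betaTilde_zero₁ <;> nlinarith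
      rw [← Finset.sum_subset hsub hz2, Finset.sum_pair (show (1:ℕ) ≠ N by omega)]
      have e1 : betaTilde (c * (((1:ℕ):ℝ) - 1)) (c * (((1:ℕ):ℝ) + 1)) θ
          = 2 * Real.sin x * Real.sin (2*h - x) / Real.sin (x + (2*h - x)) := by
        refine betaTilde_val₀ _ _ _ x (2*h - x) ?_ ?_ ?_ ?_ ?_
        · push_cast; nlinarith
        · push_cast; nlinarith
        · push_cast; nlinarith
        · rw [hxdef, hkc]; push_cast; ring
        · rw [hxdef, hkc, hch]; push_cast; ring
      have eN : betaTilde (c * (((N:ℕ):ℝ) - 1)) (c * (((N:ℕ):ℝ) + 1)) θ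
          = 2 * Real.sin (x + h) * Real.sin (h - x) / Real.sin ((x + h) + (h - x)) := by
        refine betaTilde_val₁ _ _ _ (x + h) (h - x) ?_ ?_ ?_ ?_ ?_
        · nlinarith
        · nlinarith
        · nlinarith
        · rw [hxdef, hkc, ← hcN, hch]; ring
        · rw [hxdef, hkc, ← hcN, hch]; ring
      rw [e1, eN]
      ring
    · -- generic: contributing arcs are i = k-1 and i = k
      have hk2 : 2 ≤ k := by omega
      have hk2c : (2:ℝ) ≤ (k:ℝ) := by exact_mod_cast hk2
      have hkm1 : ((k - 1 : ℕ) : ℝ) = (k:ℝ) - 1 := by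
        rw [Nat.cast_sub hk1]; norm_num
      have hsub : ({k - 1, k} : Finset ℕ) ⊆ Finset.Icc 1 N := by
        intro y hy
        simp only [Finset.mem_insert, Finset.mem_singleton] at hy
        rcases hy with rfl | rfl <;> rw [Finset.mem_Icc] <;> omega
      have hz2 : ∀ i ∈ Finset.Icc 1 N, i ∉ ({k - 1, k} : Finset ℕ) →
          betaTilde (c * ((i:ℝ) - 1)) (c * ((i:ℝ) + 1)) θ = 0 := by
        intro i hi hni
        obtain ⟨hi1, hiN⟩ := Finset.mem_Icc.1 hi
        simp only [Finset.mem_insert, Finset.mem_singleton, not_or] at hni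
        have hiNc : (i:ℝ) ≤ (N:ℝ) := by exact_mod_cast hiN
        have hi1c : (1:ℝ) ≤ (i:ℝ) := by exact_mod_cast hi1
        have hcases : i + 2 ≤ k ∨ k + 1 ≤ i := by omega
        rcases hcases with hcase | hcase
        · have hic : (i:ℝ) + 2 ≤ (k:ℝ) := by exact_mod_cast hcase
          apply betaTilde_zero₀ <;> nlinarith
        · have hic : (k:ℝ) + 1 ≤ (i:ℝ) := by exact_mod_cast hcase
          apply betaTilde_zero₁ <;> nlinarith
      rw [← Finset.sum_subset hsub hz2, Finset.sum_pair (show k - 1 ≠ k by omega)]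
      have eA : betaTilde (c * (((k - 1 : ℕ):ℝ) - 1)) (c * (((k - 1 : ℕ):ℝ) + 1)) θ
          = 2 * Real.sin (x + h) * Real.sin (h - x) / Real.sin ((x + h) + (h - x)) := by
        refine betaTilde_val₀ _ _ _ (x + h) (h - x) ?_ ?_ ?_ ?_ ?_
        · rw [hkm1]; nlinarith
        · rw [hkm1]; nlinarith
        · rw [hkm1]; nlinarith
        · rw [hkm1, hxdef, hch]; ring
        · rw [hkm1, hxdef, hch]; ring
      have eB : betaTilde (c * ((k:ℝ) - 1)) (c * ((k:ℝ) + 1)) θ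
          = 2 * Real.sin x * Real.sin (2*h - x) / Real.sin (x + (2*h - x)) := by
        refine betaTilde_val₀ _ _ _ x (2*h - x) ?_ ?_ ?_ ?_ ?_
        · nlinarith
        · exact hkl
        · nlinarith
        · rw [hxdef]
        · rw [hxdef, hch]; ring
      rw [eA, eB]
  rw [Finset.sum_sub_distrib, Finset.sum_eq_single_of_mem k hkmem hz1, hv3, hB2]
  linarith [coolness_trig' x h hs hcos]

/-- The constant-weight identity behind the construction of `L₀`: for a circle divided into
`N ≥ 3` equal arcs, the sum over `i` of (double-arc coolness minus single-arc coolness) is the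
constant `tan(π/N)`. -/
theorem stmt_4 (N : ℕ) (hN : 3 ≤ N) (θ : ℝ) :
    ∑ i ∈ Finset.Icc 1 N,
      (betaTilde (2 * π * ((i : ℝ) - 1) / N) (2 * π * ((i : ℝ) + 1) / N) θ
        - betaTilde (2 * π * ((i : ℝ) - 1) / N) (2 * π * (i : ℝ) / N) θ)
      = Real.tan (π / N) := by
  have hπ := Real.pi_pos
  set m : ℤ := ⌊θ / (2*π)⌋ with hm
  set θ' : ℝ := θ - 2*π*m with hθ'
  have key : ∀ p q : ℝ, betaTilde p q θ = betaTilde p q θ' := by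
    intro p q
    have hshift := betaTilde_shift p q θ' m
    rw [← hshift]
    congr 1
    rw [hθ']
    ring
  simp only [key]
  apply stmt_aux N hN
  · have h1 : (m:ℝ) ≤ θ / (2*π) := Int.floor_le _
    have hid : θ / (2*π) * (2*π) = θ := by field_simp
    rw [hθ']
    nlinarith
  · have h2 : θ / (2*π) < (m:ℝ) + 1 := Int.lt_floor_add_one _
    have hid : θ / (2*π) * (2*π) = θ := by field_simp
    rw [hθ']
    nlinarith
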